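/- Let b be an irrational real number, and let γ = (γ_n)_{n≥1} be nonnegative reals with ∑_{n≥1} n·γ_n < ∞ and frequencies ω_n := n² − 2∑_{k=1}^n k·γ_k − 2n·∑_{k>n} γ_k. If there exist infinitely many integers n ≥ 1 such that n−1, n, n+1 all satisfy ω_{n−1}, ω_n, ω_{n+1} ∈ b·ℤ, then 2 ∈ b·ℤ, a contradiction. Hence no such infinite family of consecutive triples exists. -/

import Mathlib

/-- The Benjamin–Ono frequencies `ω_n = n² − 2∑_{k=1}^n k γ_k − 2n ∑_{k>n} γ_k`. -/
noncomputable def boFreq (γ : ℕ → ℝ) (n : ℕ) : ℝ :=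
  (n : ℝ) ^ 2 - 2 * (∑ k ∈ Finset.Icc 1 n, (k : ℝ) * γ k)
    - 2 * n * ∑' k : ℕ, if n < k then γ k else 0

/-!
The second difference of the frequencies is `ω_{n+1} − 2ω_n + ω_{n−1} = 2 + 2γ_n`, so every
triple of consecutive frequencies in `b·ℤ` puts `2 + 2γ_n` in `b·ℤ`. Since `γ_n → 0` and `b·ℤ` is
a discrete, hence closed, subgroup of `ℝ`, infinitely many such `n` would force `2 ∈ b·ℤ`,
which is impossible for irrational `b`.
-/

open Filter Topology AddSubgroup

theorem Summable.of_nat_mul {f : ℕ → ℝ} (hf : Summable fun n : ℕ => (n : ℝ) * f n) :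
    Summable f := by
  refine Summable.of_norm_bounded_eventually hf.norm ?_
  rw [Nat.cofinite_eq_atTop]
  filter_upwards [eventually_ge_atTop 1] with n hn
  rw [norm_mul, Real.norm_natCast]
  exact le_mul_of_one_le_left (norm_nonneg _) (by exact_mod_cast hn)

theorem Summable.tsum_ite_lt_eq_add {f : ℕ → ℝ} (hf : Summable f) (n : ℕ) :
    (∑' k : ℕ, if n < k then f k else 0)
      = f (n + 1) + ∑' k : ℕ, if n + 1 < k then f k else 0 := by
  have hs : Summable fun k : ℕ => if n < k then f k else 0 :=
    hf.indicator {k | n < k} |>.congr fun k => by simp [Set.indicator]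
  rw [hs.tsum_eq_add_tsum_ite (n + 1), if_pos n.lt_succ_self]
  congr 1
  refine tsum_congr fun k => ?_
  split_ifs <;> first | rfl | omega

theorem boFreq_second_difference {γ : ℕ → ℝ} (hγ : Summable γ) (n : ℕ) :
    boFreq γ (n + 2) - 2 * boFreq γ (n + 1) + boFreq γ n = 2 + 2 * γ (n + 1) := by
  simp only [boFreq, Finset.sum_Icc_succ_top (show 1 ≤ n + 2 by omega),
    Finset.sum_Icc_succ_top (show 1 ≤ n + 1 by omega), hγ.tsum_ite_lt_eq_add n,
    hγ.tsum_ite_lt_eq_add (n + 1)]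
  push_cast
  ring

theorem two_add_two_mul_mem_of_boFreq_mem {γ : ℕ → ℝ} (hγ : Summable γ) {H : AddSubgroup ℝ}
    {n : ℕ} (h₀ : boFreq γ n ∈ H) (h₁ : boFreq γ (n + 1) ∈ H) (h₂ : boFreq γ (n + 2) ∈ H) :
    2 + 2 * γ (n + 1) ∈ H := by
  rw [← boFreq_second_difference hγ n, two_mul]
  exact add_mem (sub_mem h₂ (add_mem h₁ h₁)) h₀

theorem mem_zmultiples_iff_exists_eq_mul {b x : ℝ} :
    x ∈ zmultiples b ↔ ∃ m : ℤ, x = b * m := by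
  simp only [mem_zmultiples_iff, zsmul_eq_mul, eq_comm, mul_comm]

theorem Irrational.ofNat_notMem_zmultiples {b : ℝ} (hb : Irrational b) (n : ℕ) [n.AtLeastTwo] :
    (OfNat.ofNat n : ℝ) ∉ zmultiples b := by
  intro h
  obtain ⟨m, hm⟩ := mem_zmultiples_iff_exists_eq_mul.mp h
  have hm0 : m ≠ 0 := by rintro rfl; simp at hm
  exact (hb.intCast_mul hm0).ne_ofNat n (by rw [hm, mul_comm])

theorem stmt_10_general (b : ℝ) (hb : Irrational b)
    (γ : ℕ → ℝ)
    (hsum : Summable fun n : ℕ => (n : ℝ) * γ n) :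
    {n : ℕ | 1 ≤ n ∧ (∃ m : ℤ, boFreq γ (n - 1) = b * m)
      ∧ (∃ m : ℤ, boFreq γ n = b * m)
      ∧ (∃ m : ℤ, boFreq γ (n + 1) = b * m)}.Finite := by
  have hγ : Summable γ := hsum.of_nat_mul
  by_contra hinf
  have hfreq : ∃ᶠ n in atTop, 2 + 2 * γ n ∈ zmultiples b := by
    refine (Nat.frequently_atTop_iff_infinite.mpr hinf).mono ?_
    rintro (_ | n) ⟨hn, h₀, h₁, h₂⟩
    · omega
    simp only [← mem_zmultiples_iff_exists_eq_mul, Nat.add_sub_cancel] at h₀ h₁ h₂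
    exact two_add_two_mul_mem_of_boFreq_mem hγ h₀ h₁ h₂
  have hlim : Tendsto (fun n => 2 + 2 * γ n) atTop (𝓝 2) := by
    simpa using (hγ.tendsto_atTop_zero.const_mul 2).const_add 2
  exact hb.ofNat_notMem_zmultiples 2
    (isClosed_of_discrete.mem_of_frequently_of_tendsto hfreq hlim)

/-- For irrational `b`, there are only finitely many `n ≥ 1` such that
`ω_{n−1}, ω_n, ω_{n+1}` all belong to `b·ℤ`. -/
theorem stmt_10 (b : ℝ) (hb : Irrational b)
    (γ : ℕ → ℝ) (hγ : ∀ n, 0 ≤ γ n)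
    (hsum : Summable fun n : ℕ => (n : ℝ) * γ n) :
    {n : ℕ | 1 ≤ n ∧ (∃ m : ℤ, boFreq γ (n - 1) = b * m)
      ∧ (∃ m : ℤ, boFreq γ n = b * m)
      ∧ (∃ m : ℤ, boFreq γ (n + 1) = b * m)}.Finite :=
  stmt_10_general b hb γ hsum
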